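/- arXiv:0711.0097 — 2 statements merged into one kernel-verified Lean document; each statement's English description precedes it below -/
import Mathlib

section
/- If H is a nonabelian good group whose Frattini subgroup Φ(H) has order 2 and which has no direct factor of order 2, then H is an extraspecial 2-group, or the central product of an extraspecial 2-group with a cyclic group of order 4. -/
/-- A group is *dihedral* if it is isomorphic to some `DihedralGroup n` with `n ≠ 0`. -/
def IsDihedralGroup (Q : Type*) [Group Q] : Prop :=
  ∃ n : ℕ, n ≠ 0 ∧ Nonempty (Q ≃* DihedralGroup n)

/-- A 2-group `G` is *good* if for all `g h : G` the subgroup `⟨g²⟩` is normal in `G`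
and the quotient `⟨g,h⟩/⟨g²⟩` is abelian or dihedral. -/
def IsGood (G : Type*) [Group G] : Prop :=
  IsPGroup 2 G ∧
  ∀ g h : G, ∃ hn : (Subgroup.zpowers (g ^ 2)).Normal,
    haveI := hn.subgroupOf (Subgroup.closure {g, h})
    (∀ x y : ↥(Subgroup.closure {g, h}) ⧸
        (Subgroup.zpowers (g ^ 2)).subgroupOf (Subgroup.closure {g, h}), x * y = y * x) ∨
    IsDihedralGroup (↥(Subgroup.closure {g, h}) ⧸
        (Subgroup.zpowers (g ^ 2)).subgroupOf (Subgroup.closure {g, h}))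

/-- `G` is the (internal) direct product of its subgroups `E` and `H`. -/
def IsDirectProdDecomp {G : Type*} [Group G] (E H : Subgroup G) : Prop :=
  E.Normal ∧ H.Normal ∧ Disjoint E H ∧ E ⊔ H = ⊤

/-- `H` has a direct factor of order 2. -/
def HasC2DirectFactor (H : Type*) [Group H] : Prop :=
  ∃ C K : Subgroup H, IsDirectProdDecomp C K ∧ Nat.card C = 2

/-- An extraspecial 2-group: centre, commutator subgroup and Frattini subgroup
coincide and have order 2. -/
def IsExtraspecial2 (H : Type*) [Group H] : Prop :=
  IsPGroup 2 H ∧ Subgroup.center H = commutator H ∧ Subgroup.center H = frattini H ∧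
    Nat.card (Subgroup.center H) = 2

/-- Condition (ii): `H` is extraspecial, or the central product of an extraspecial
2-group with a cyclic group of order 4 (amalgamated over the centre of order 2). -/
def CondII (H : Type*) [Group H] : Prop :=
  IsExtraspecial2 H ∨
    ∃ S C : Subgroup H, IsExtraspecial2 S ∧ IsCyclic C ∧ Nat.card C = 4 ∧
      (∀ s ∈ S, ∀ c ∈ C, s * c = c * s) ∧ S ⊔ C = ⊤ ∧ Nat.card ↥(S ⊓ C) = 2


/-!
Every square lies in `Φ(H) = ⟨z⟩`: as `⟨g²⟩` is normal, a maximal subgroup `M` missing `g²`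
would satisfy `M⟨g²⟩ = H`, making `g` an odd power of an element of `M`. So `H/⟨z⟩` is elementary abelian,
`z` is central, and every `x ∉ ⟨z⟩` is avoided by a normal maximal subgroup `K ⊇ ⟨z⟩` with
`H = K⟨x⟩`. In particular a central involution outside `⟨z⟩` would split off as a direct factor.
If `Z(H) = ⟨z⟩` then `H` is extraspecial. Otherwise a central `c ∉ ⟨z⟩` has `c² = z`, so
`Z(H) = ⟨c⟩ ≅ C₄`, and a maximal subgroup `S ⊇ ⟨z⟩` avoiding `c` is extraspecial with
`H = S ∘ ⟨c⟩`.
-/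

open Subgroup Pointwise
open scoped commutatorElement

section

variable {G : Type*} [Group G]

theorem eq_one_or_eq_of_mem_zpowers {z x : G} (hz : orderOf z = 2) (hx : x ∈ zpowers z) :
    x = 1 ∨ x = z := by
  classical
  rw [(orderOf_pos_iff.mp (by omega)).mem_zpowers_iff_mem_range_orderOf, hz] at hx
  simpa [Finset.range_add_one, eq_comm, or_comm] using hx

theorem Subgroup.normal_of_le_center {K : Subgroup G} (hK : K ≤ center G) : K.Normal :=
  ⟨fun n hn g => by rwa [mem_center_iff.mp (hK hn) g, mul_inv_cancel_right]⟩

theorem mem_center_of_orderOf_eq_two {z : G} (hz : orderOf z = 2) [hN : (zpowers z).Normal] :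
    z ∈ center G := by
  refine mem_center_iff.mpr fun g => ?_
  rcases eq_one_or_eq_of_mem_zpowers hz (hN.conj_mem z (mem_zpowers z) g) with h | h
  · rw [mul_inv_eq_one, mul_eq_left] at h
    simp [h] at hz
  · exact mul_inv_eq_iff_eq_mul.mp h

theorem commutatorElement_mem_of_forall_sq_mem {N : Subgroup G} [hN : N.Normal]
    (hsq : ∀ g : G, g ^ 2 ∈ N) (a b : G) : ⁅a, b⁆ ∈ N := by
  have h : ⁅a, b⁆ = (a * b) ^ 2 * (b⁻¹ * (a ^ 2)⁻¹ * b⁻¹⁻¹) * (b ^ 2)⁻¹ := by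
    rw [commutatorElement_def, sq (a * b)]; group
  rw [h]
  exact N.mul_mem (N.mul_mem (hsq _) (hN.conj_mem _ (N.inv_mem (hsq a)) b⁻¹))
    (N.inv_mem (hsq b))

theorem inf_zpowers_eq_zpowers_sq {K : Subgroup G} {c : G} (hc : c ∉ K) (hc2 : c ^ 2 ∈ K) :
    K ⊓ zpowers c = zpowers (c ^ 2) := by
  refine le_antisymm (fun x ⟨hxK, hx⟩ => ?_)
    (le_inf (zpowers_le.mpr hc2) (zpowers_le.mpr (pow_mem (mem_zpowers c) 2)))
  obtain ⟨j, rfl⟩ := mem_zpowers_iff.mp hx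
  obtain ⟨m, rfl | rfl⟩ := Int.even_or_odd' j
  · exact ⟨m, by simp only [← zpow_natCast, ← zpow_mul]; norm_num⟩
  · refine absurd ?_ hc
    have h : c = c ^ (2 * m + 1) * (c ^ 2) ^ (-m) := by group
    rw [h]
    exact K.mul_mem hxK (K.zpow_mem hc2 _)

theorem mem_or_mul_inv_mem_of_mem_sup_zpowers {K : Subgroup G} [K.Normal] {h y : G}
    (hh : h ^ 2 ∈ K) (hy : y ∈ K ⊔ zpowers h) : y ∈ K ∨ y * h⁻¹ ∈ K := by
  rw [← SetLike.mem_coe, normal_mul, Set.mem_mul] at hy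
  obtain ⟨k, hk, _, ⟨j, rfl⟩, rfl⟩ := hy
  obtain ⟨m, rfl | rfl⟩ := Int.even_or_odd' j
  · left
    have h2m : h ^ (2 * m) = (h ^ 2) ^ m := by group
    exact K.mul_mem hk (show h ^ (2 * m) ∈ K from h2m ▸ K.zpow_mem hh m)
  · right
    have h2m : h ^ (2 * m + 1) * h⁻¹ = (h ^ 2) ^ m := by group
    simpa only [mul_assoc, h2m] using K.mul_mem hk (K.zpow_mem hh m)

theorem exists_normal_isCoatom_notMem {Z : Subgroup G} [Z.Normal] (hsq : ∀ g : G, g ^ 2 ∈ Z)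
    {x : G} (hx : x ∉ Z) :
    ∃ K : Subgroup G, Z ≤ K ∧ x ∉ K ∧ K.Normal ∧ IsCoatom K ∧ K ⊔ zpowers x = ⊤ := by
  obtain ⟨K, -, hK⟩ := zorn_le_nonempty₀ {K : Subgroup G | Z ≤ K ∧ x ∉ K}
    (fun c hc hchain J hJ => ⟨sSup c, ⟨(hc hJ).1.trans (le_sSup hJ), fun hxc => by
      obtain ⟨J', hJ', hxJ'⟩ := (mem_sSup_of_directedOn ⟨J, hJ⟩ hchain.directedOn).mp hxc
      exact (hc hJ').2 hxJ'⟩, fun _ => le_sSup⟩) Z ⟨le_rfl, hx⟩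
  obtain ⟨hZK, hxK⟩ := hK.prop
  have hKn : K.Normal := ⟨fun k hk g => by
    simpa [commutatorElement_def] using
      K.mul_mem (hZK (commutatorElement_mem_of_forall_sq_mem hsq g k)) hk⟩
  have hx_mem : ∀ h ∉ K, x ∈ K ⊔ zpowers h := fun h hh => by
    by_contra hx'
    exact hh (hK.eq_of_le ⟨hZK.trans le_sup_left, hx'⟩ le_sup_left ▸
      mem_sup_right (mem_zpowers h))
  have htop : K ⊔ zpowers x = ⊤ := by
    refine eq_top_iff.mpr fun h _ => ?_
    by_cases hh : h ∈ K
    · exact mem_sup_left hh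
    have hxh := (mem_or_mul_inv_mem_of_mem_sup_zpowers (hZK (hsq h)) (hx_mem h hh)).resolve_left
      hxK
    simpa using mul_mem (mem_sup_left (inv_mem hxh)) (mem_sup_right (mem_zpowers x))
  refine ⟨K, hZK, hxK, hKn, ⟨fun h => hxK (h ▸ mem_top x), fun J hKJ => ?_⟩, htop⟩
  obtain ⟨h, hhJ, hhK⟩ := SetLike.exists_of_lt hKJ
  exact top_le_iff.mp (htop ▸ sup_le hKJ.le
    (zpowers_le.mpr (sup_le hKJ.le (zpowers_le.mpr hhJ) (hx_mem h hhK))))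

theorem frattini_le_of_forall_sq_mem {Z : Subgroup G} [Z.Normal] (hsq : ∀ g : G, g ^ 2 ∈ Z) :
    frattini G ≤ Z := by
  intro x hx
  by_contra hxZ
  obtain ⟨K, -, hxK, -, hK, -⟩ := exists_normal_isCoatom_notMem hsq hxZ
  exact hxK (frattini_le_coatom hK hx)

theorem IsPGroup.sq_mem_frattini (hp : IsPGroup 2 G) (hn : ∀ g : G, (zpowers (g ^ 2)).Normal)
    (g : G) : g ^ 2 ∈ frattini G := by
  refine mem_iInf.mpr fun M => mem_iInf.mpr fun hM => ?_
  by_contra hgM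
  have hsup : M ⊔ zpowers (g ^ 2) = ⊤ :=
    hM.2 _ (left_lt_sup.mpr fun h => hgM (h (mem_zpowers _)))
  have hg : g ∈ (M : Set G) * zpowers (g ^ 2) := by
    rw [← mul_normal, hsup]; trivial
  obtain ⟨m, hm, _, ⟨k, rfl⟩, hmk⟩ := hg
  have hm' : m = g ^ (1 - 2 * k) := by
    rw [eq_mul_inv_of_mul_eq hmk]; group
  obtain ⟨n, hn⟩ := hp g
  have hcop : IsCoprime (1 - 2 * k) (orderOf g : ℤ) :=
    ((show IsCoprime (1 - 2 * k) 2 from ⟨1, k, by ring⟩).pow_right (n := n))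
      |>.of_isCoprime_of_dvd_right (by exact_mod_cast orderOf_dvd_of_pow_eq_one hn)
  have hgm : g ∈ zpowers m :=
    hm' ▸ mem_zpowers_zpow_iff.mpr (Int.isCoprime_iff_gcd_eq_one.mp hcop)
  exact hgM (M.pow_mem (zpowers_le.mpr hm hgm) 2)

theorem hasC2DirectFactor_of_mem_center {Z : Subgroup G} [Z.Normal] (hsq : ∀ g : G, g ^ 2 ∈ Z)
    {y : G} (hy : y ∈ center G) (hy2 : y ^ 2 = 1) (hyZ : y ∉ Z) : HasC2DirectFactor G := by
  obtain ⟨K, -, hyK, hKn, -, hKy⟩ := exists_normal_isCoatom_notMem hsq hyZ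
  have hy_ord : orderOf y = 2 := orderOf_eq_prime hy2 fun h => hyZ (h ▸ Z.one_mem)
  refine ⟨zpowers y, K, ⟨normal_of_le_center (zpowers_le.mpr hy), hKn, ?_, by rwa [sup_comm]⟩,
    by rw [Nat.card_zpowers, hy_ord]⟩
  refine disjoint_def.mpr fun hx hxK => ?_
  exact (eq_one_or_eq_of_mem_zpowers hy_ord hx).resolve_right fun h => hyK (h ▸ hxK)

theorem center_le_zpowers_of_not_hasC2DirectFactor (hnf : ¬ HasC2DirectFactor G) {c : G}
    (hc : c ∈ center G) (hsq : ∀ g : G, g ^ 2 ∈ zpowers (c ^ 2)) : center G ≤ zpowers c := by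
  have : (zpowers (c ^ 2)).Normal := normal_of_le_center (zpowers_le.mpr (pow_mem hc 2))
  intro y hy
  obtain ⟨k, hk⟩ := mem_zpowers_iff.mp (hsq y)
  have hyc : y * c ^ (-k) ∈ zpowers (c ^ 2) := by
    by_contra h
    refine hnf (hasC2DirectFactor_of_mem_center hsq (mul_mem hy (zpow_mem hc _)) ?_ h)
    rw [Commute.mul_pow (mem_center_iff.mp (zpow_mem hc (-k)) y), ← hk]
    group
  have hy' : y = y * c ^ (-k) * c ^ k := by group
  rw [hy']
  exact mul_mem (zpowers_le.mpr (pow_mem (mem_zpowers c) 2) hyc) (zpow_mem (mem_zpowers c) k)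

theorem coe_mem_center_of_sup_eq_top {S C : Subgroup G} (hC : C ≤ center G) (hSC : S ⊔ C = ⊤)
    {u : S} (hu : u ∈ center S) : (u : G) ∈ center G := by
  have : S ⊔ C ≤ centralizer {(u : G)} := sup_le
    (fun s hs => mem_centralizer_singleton_iff.mpr
      (congrArg Subtype.val (mem_center_iff.mp hu ⟨s, hs⟩)))
    (fun c hc => mem_centralizer_singleton_iff.mpr (mem_center_iff.mp (hC hc) u).symm)
  exact mem_center_iff.mpr fun g => mem_centralizer_singleton_iff.mp (this (hSC ▸ mem_top g))

theorem mul_comm_of_sup_eq_top {S C : Subgroup G} (hC : C ≤ center G) (hSC : S ⊔ C = ⊤)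
    (hS : ∀ a b : S, a * b = b * a) (a b : G) : a * b = b * a := by
  have hS' : S ≤ center G := fun s hs =>
    coe_mem_center_of_sup_eq_top (u := ⟨s, hs⟩) hC hSC (mem_center_iff.mpr fun g => hS g _)
  have htop : ⊤ ≤ center G := hSC ▸ sup_le hS' hC
  exact mem_center_iff.mp (htop (mem_top b)) a

theorem isExtraspecial2_of_center_eq_zpowers (hp : IsPGroup 2 G) {z : G} (hz : orderOf z = 2)
    (hcen : center G = zpowers z) (hsq : ∀ g : G, g ^ 2 ∈ zpowers z)
    (hna : ¬ ∀ a b : G, a * b = b * a) : IsExtraspecial2 G := by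
  have : (zpowers z).Normal := hcen ▸ inferInstance
  have hcomm : commutator G = zpowers z := by
    refine le_antisymm ?_ ?_
    · rw [_root_.commutator_def, commutator_le]
      exact fun a _ b _ => commutatorElement_mem_of_forall_sq_mem hsq a b
    · obtain ⟨a, b, hab⟩ : ∃ a b : G, a * b ≠ b * a := by simpa using hna
      rcases eq_one_or_eq_of_mem_zpowers hz (commutatorElement_mem_of_forall_sq_mem hsq a b)
        with h | h
      · exact absurd (commutatorElement_eq_one_iff_mul_comm.mp h) hab
      · exact zpowers_le.mpr (h ▸ commutator_mem_commutator (mem_top a) (mem_top b))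
  have hfrat : frattini G = zpowers z := by
    refine le_antisymm (frattini_le_of_forall_sq_mem hsq) ?_
    have hn (g : G) : (zpowers (g ^ 2)).Normal :=
      normal_of_le_center (hcen ▸ zpowers_le.mpr (hsq g))
    rw [← hcomm, _root_.commutator_def, commutator_le]
    exact fun a _ b _ => commutatorElement_mem_of_forall_sq_mem (hp.sq_mem_frattini hn) a b
  exact ⟨hp, hcen.trans hcomm.symm, hcen.trans hfrat.symm, by rw [hcen, Nat.card_zpowers, hz]⟩

theorem isExtraspecial2_of_sup_zpowers_eq_top (hp : IsPGroup 2 G) {z c : G} (hz : orderOf z = 2)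
    (hsq : ∀ g : G, g ^ 2 ∈ zpowers z) (hc : c ∈ center G) (hcen : center G ≤ zpowers c)
    {S : Subgroup G} (hSc : S ⊔ zpowers c = ⊤) (hSinf : S ⊓ zpowers c = zpowers z)
    (hna : ¬ ∀ a b : G, a * b = b * a) : IsExtraspecial2 S := by
  have hCcen : zpowers c ≤ center G := zpowers_le.mpr hc
  obtain ⟨hzS, hzc⟩ := mem_inf.mp (hSinf.ge (mem_zpowers z))
  have hmem (u : S) : u ∈ zpowers (⟨z, hzS⟩ : S) ↔ (u : G) ∈ zpowers z := by
    simp [mem_zpowers_iff, Subtype.ext_iff]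
  refine isExtraspecial2_of_center_eq_zpowers (hp.to_subgroup S) (by rwa [orderOf_mk])
    (le_antisymm (fun u hu => ?_) ?_) (fun u => (hmem _).mpr (by simpa using hsq u))
    (fun h => hna (mul_comm_of_sup_eq_top hCcen hSc h))
  · exact (hmem u).mpr
      (hSinf ▸ mem_inf.mpr ⟨u.2, hcen (coe_mem_center_of_sup_eq_top hCcen hSc hu)⟩)
  · exact zpowers_le.mpr
      (mem_center_iff.mpr fun u => Subtype.ext (mem_center_iff.mp (hCcen hzc) u))

end

/-- **Lemma 4.2**: a nonabelian good group with Frattini subgroup of order 2 and no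
direct factor of order 2 is extraspecial or the central product of an extraspecial
2-group with a cyclic group of order 4. -/
theorem good_frattini_two (H : Type*) [Group H] (hgood : IsGood H)
    (hna : ¬ ∀ a b : H, a * b = b * a) (hfr : Nat.card (frattini H) = 2)
    (hnf : ¬ HasC2DirectFactor H) : CondII H := by
  obtain ⟨hp, hgood⟩ := hgood
  obtain ⟨z, hFz⟩ :=
    (frattini H).isCyclic_iff_exists_zpowers_eq_top.mp (isCyclic_of_prime_card hfr)
  have hz : orderOf z = 2 := by rw [← Nat.card_zpowers, hFz, hfr]
  have hsq (g : H) : g ^ 2 ∈ zpowers z := hFz ▸ hp.sq_mem_frattini (fun g => (hgood g g).1) g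
  have : (zpowers z).Normal := hFz ▸ inferInstance
  by_cases hcen : center H ≤ zpowers z
  · exact .inl (isExtraspecial2_of_center_eq_zpowers hp hz
      (le_antisymm hcen (zpowers_le.mpr (mem_center_of_orderOf_eq_two hz))) hsq hna)
  obtain ⟨c, hc, hcz⟩ := SetLike.not_le_iff_exists.mp hcen
  have hc2 : c ^ 2 = z := (eq_one_or_eq_of_mem_zpowers hz (hsq c)).resolve_left
    fun h => hnf (hasC2DirectFactor_of_mem_center hsq hc h hcz)
  have hc4 : orderOf c = 4 := orderOf_eq_prime_pow (p := 2) (n := 1)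
    (by rw [pow_one, hc2, ← orderOf_eq_one_iff, hz]; norm_num)
    (by rw [show 2 ^ (1 + 1) = 2 * 2 by norm_num, pow_mul, hc2, ← hz, pow_orderOf_eq_one])
  obtain ⟨S, hzS, hcS, -, -, hSc⟩ := exists_normal_isCoatom_notMem hsq hcz
  have hSinf : S ⊓ zpowers c = zpowers z :=
    hc2 ▸ inf_zpowers_eq_zpowers_sq hcS (hc2 ▸ hzS (mem_zpowers z))
  exact .inr ⟨S, zpowers c, isExtraspecial2_of_sup_zpowers_eq_top hp hz hsq hc
      (center_le_zpowers_of_not_hasC2DirectFactor hnf hc (hc2 ▸ hsq)) hSc hSinf hna,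
    inferInstance, by rw [Nat.card_zpowers, hc4],
    fun s _ x hx => mem_center_iff.mp (zpowers_le.mpr hc hx) s, hSc,
    by rw [hSinf, Nat.card_zpowers, hz]⟩
end

section
/- Let H be a good group of exponent 4 and X a subset of H such that the Frattini subgroup Φ(H) is the (internal) direct product of the subgroups ⟨x²⟩ for x ∈ X, with each x² nontrivial. Then either the subgroup ⟨X⟩ is abelian, or all but one of the elements of X commute with each other and are inverted under conjugation by the remaining one. -/
/-!
Goodness together with exponent 4 makes every square central, so commutators are central
involutions and bilinear. In an abelian or dihedral group every element commutes with or inverts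
each element of order greater than 2; applied in `⟨u, v⟩ / ⟨u²⟩`, this gives
`⁅u, v⁆ ∈ ⟨u², v²⟩` whenever `v² ∉ ⟨u²⟩`. For distinct `x, y ∈ X` it leaves
`⁅x, y⁆ ∈ {1, x², y²}`: `x` and `y` commute or one inverts the other (in exponent 4,
`⁅x, y⁆ = y²` says exactly that `x` inverts `y`). Applied to products of two elements of `X`, and
compared with the independence of the squares, the same fact rules out an element inverted by two
others, a chain in which `x` inverts `y` and `y` inverts `z`, and an inverting pair with a common
commuting partner; these three rules force the stated shape.
-/

open Subgroup
open scoped commutatorElement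

theorem DihedralGroup.mul_comm_or_conj_eq_inv {n : ℕ} (a : DihedralGroup n)
    {b : DihedralGroup n} (hb : b ^ 2 ≠ 1) : a * b = b * a ∨ a * b * a⁻¹ = b⁻¹ := by
  rcases b with j | j
  · rcases a with i | i
    · left
      simp only [r_mul_r, add_comm]
    · right
      simp only [sr_mul_r, inv_sr, sr_mul_sr, inv_r]
      ring_nf
  · exact absurd (by rw [sq, sr_mul_self]) hb

theorem mul_comm_or_conj_eq_inv_of_abelian_or_dihedral {Q : Type*} [Group Q]
    (hQ : (∀ x y : Q, x * y = y * x) ∨ IsDihedralGroup Q) (a : Q) {b : Q} (hb : b ^ 2 ≠ 1) :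
    a * b = b * a ∨ a * b * a⁻¹ = b⁻¹ := by
  rcases hQ with hQ | ⟨n, -, ⟨e⟩⟩
  · exact Or.inl (hQ a b)
  · have he : e b ^ 2 ≠ 1 := by rwa [← map_pow, map_ne_one_iff e e.injective]
    rcases (e a).mul_comm_or_conj_eq_inv he with h | h
    · exact Or.inl (e.injective (by simpa only [map_mul] using h))
    · exact Or.inr (e.injective (by simpa only [map_mul, map_inv] using h))

theorem mem_zpowers_iff_of_sq_eq_one {G : Type*} [Group G] {a g : G} (ha : a ^ 2 = 1) :
    g ∈ zpowers a ↔ g = 1 ∨ g = a := by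
  constructor
  · rintro ⟨k, rfl⟩
    dsimp only
    rw [zpow_eq_zpow_emod' k ha]
    rcases Int.emod_two_eq k with h | h <;> simp [h]
  · rintro (rfl | rfl)
    · exact one_mem _
    · exact mem_zpowers _

namespace IsGood

variable {G : Type*} [Group G]

theorem commutatorElement_mem_or (hG : IsGood G) {u v : G} (hv : v ^ 2 ∉ zpowers (u ^ 2)) :
    ⁅u, v⁆ ∈ zpowers (u ^ 2) ∨ ⁅u, v⁆ * v ^ 2 ∈ zpowers (u ^ 2) := by
  obtain ⟨hN, hQ⟩ := hG.2 u v
  have := hN.subgroupOf (closure {u, v})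
  set π := QuotientGroup.mk' ((zpowers (u ^ 2)).subgroupOf (closure {u, v}))
  have hπ (k : closure ({u, v} : Set G)) : π k = 1 ↔ (k : G) ∈ zpowers (u ^ 2) := by
    rw [QuotientGroup.mk'_apply, QuotientGroup.eq_one_iff, mem_subgroupOf]
  let u' : closure ({u, v} : Set G) := ⟨u, subset_closure (by simp)⟩
  let v' : closure ({u, v} : Set G) := ⟨v, subset_closure (by simp)⟩
  have hv' : π v' ^ 2 ≠ 1 := by rwa [← map_pow, Ne, hπ]
  rcases mul_comm_or_conj_eq_inv_of_abelian_or_dihedral hQ (π u') hv' with h | h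
  · left
    rwa [← commutatorElement_eq_one_iff_mul_comm, ← map_commutatorElement, hπ] at h
  · right
    have : π (⁅u', v'⁆ * v' ^ 2) = 1 := by
      rw [map_mul, map_commutatorElement, commutatorElement_def, h, map_pow]
      group
    exact (hπ _).1 this

theorem commutatorElement_mem (hG : IsGood G) {u v : G} {S : Subgroup G} (hu : u ^ 2 ∈ S)
    (hv : v ^ 2 ∈ S) (hvu : v ^ 2 ∉ zpowers (u ^ 2)) : ⁅u, v⁆ ∈ S := by
  have hle : zpowers (u ^ 2) ≤ S := zpowers_le.2 hu
  rcases hG.commutatorElement_mem_or hvu with h | h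
  · exact hle h
  · exact (mul_mem_cancel_right hv).1 (hle h)

theorem sq_mem_center (hG : IsGood G) (h4 : ∀ g : G, g ^ 4 = 1) (g : G) : g ^ 2 ∈ center G := by
  have hg : (g ^ 2) ^ 2 = 1 := by rw [← pow_mul]; exact h4 g
  refine mem_center_iff.2 fun h => ?_
  have hconj := (hG.2 g g).1.conj_mem _ (mem_zpowers _) h
  rcases (mem_zpowers_iff_of_sq_eq_one hg).1 hconj with h1 | h1
  · rw [conj_eq_one_iff.1 h1, mul_one, one_mul]
  · exact mul_inv_eq_iff_eq_mul.1 h1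

end IsGood

section CentralSquares

variable {G : Type*} [Group G]

theorem commutatorElement_mem_center_of_sq_mem_center (hsq : ∀ g : G, g ^ 2 ∈ center G)
    (x y : G) : ⁅x, y⁆ ∈ center G := by
  have : ⁅x, y⁆ = (x * y) ^ 2 * x⁻¹ ^ 2 * y⁻¹ ^ 2 :=
    calc ⁅x, y⁆ = x * y * x * (x⁻¹ ^ 2 * y) * y⁻¹ ^ 2 := by
          rw [commutatorElement_def]; group
      _ = x * y * x * (y * x⁻¹ ^ 2) * y⁻¹ ^ 2 := by rw [mem_center_iff.1 (hsq x⁻¹) y]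
      _ = (x * y) ^ 2 * x⁻¹ ^ 2 * y⁻¹ ^ 2 := by simp only [sq]; group
  rw [this]
  exact mul_mem (mul_mem (hsq _) (hsq _)) (hsq _)

theorem commutatorElement_mul_left_of_sq_mem_center (hsq : ∀ g : G, g ^ 2 ∈ center G)
    (x y z : G) : ⁅x * y, z⁆ = ⁅x, z⁆ * ⁅y, z⁆ := by
  have hc := mem_center_iff.1 (commutatorElement_mem_center_of_sq_mem_center hsq y z)
  rw [commutatorElement_mul_left_eq_conj_mul, hc x, mul_inv_cancel_right, hc]

theorem commutatorElement_mul_right_of_sq_mem_center (hsq : ∀ g : G, g ^ 2 ∈ center G)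
    (x y z : G) : ⁅x, y * z⁆ = ⁅x, y⁆ * ⁅x, z⁆ := by
  have hc := mem_center_iff.1 (commutatorElement_mem_center_of_sq_mem_center hsq x z)
  rw [commutatorElement_mul_right_eq_mul_conj, mul_assoc _ y, hc y, ← mul_assoc,
    mul_inv_cancel_right]

theorem commutatorElement_mul_self_of_sq_mem_center (hsq : ∀ g : G, g ^ 2 ∈ center G)
    (x y : G) : ⁅x, y⁆ * ⁅x, y⁆ = 1 := by
  rw [← commutatorElement_mul_left_of_sq_mem_center hsq, ← sq,
    commutatorElement_eq_one_iff_mul_comm]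
  exact (mem_center_iff.1 (hsq x) y).symm

theorem commutatorElement_comm_of_sq_mem_center (hsq : ∀ g : G, g ^ 2 ∈ center G) (x y : G) :
    ⁅x, y⁆ = ⁅y, x⁆ := by
  rw [← commutatorElement_inv, inv_eq_of_mul_eq_one_left
    (commutatorElement_mul_self_of_sq_mem_center hsq y x)]

theorem mul_sq_of_sq_mem_center (hsq : ∀ g : G, g ^ 2 ∈ center G) (x y : G) :
    (x * y) ^ 2 = ⁅x, y⁆ * x ^ 2 * y ^ 2 :=
  calc (x * y) ^ 2 = x * y * x⁻¹ * y⁻¹ * (y * x ^ 2) * y := by simp only [sq]; group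
    _ = x * y * x⁻¹ * y⁻¹ * (x ^ 2 * y) * y := by rw [mem_center_iff.1 (hsq x) y]
    _ = ⁅x, y⁆ * x ^ 2 * y ^ 2 := by rw [commutatorElement_def, sq y]; group

theorem sq_mul_mul_sq_of_pow_four (hsq : ∀ g : G, g ^ 2 ∈ center G) (h4 : ∀ g : G, g ^ 4 = 1)
    (g a : G) : g ^ 2 * a * g ^ 2 = a := by
  rw [mul_assoc, mem_center_iff.1 (hsq g) a, ← mul_assoc, ← pow_add, h4, one_mul]

end CentralSquares

theorem inv_mul_mul_eq_inv_of_commutatorElement_eq_sq {G : Type*} [Group G] {y a : G}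
    (ha : a ^ 4 = 1) (h : ⁅y, a⁆ = a ^ 2) : y⁻¹ * a * y = a⁻¹ := by
  rw [commutatorElement_def, mul_inv_eq_iff_eq_mul, ← pow_succ] at h
  have hconj : y * a * y⁻¹ = a⁻¹ := by
    rw [h]
    exact eq_inv_of_mul_eq_one_left (by rw [← pow_succ, ha])
  calc y⁻¹ * a * y = (y⁻¹ * a⁻¹ * y)⁻¹ := by group
    _ = (y⁻¹ * (y * a * y⁻¹) * y)⁻¹ := by rw [hconj]
    _ = a⁻¹ := by group

def SquaresIndependent {G : Type*} [Group G] (X : Set G) : Prop :=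
  ∀ d ∈ X, d ^ 2 ∉ Subgroup.closure ((· ^ 2) '' (X \ {d}))

namespace SquaresIndependent

variable {G : Type*} [Group G] {X : Set G}

theorem of_iSupIndep (hnt : ∀ x ∈ X, x ^ 2 ≠ 1)
    (hindep : iSupIndep (fun x : X => zpowers ((x : G) ^ 2))) : SquaresIndependent X := by
  intro d hd hmem
  have hle : Subgroup.closure ((· ^ 2) '' (X \ {d})) ≤
      ⨆ (j : X) (_ : j ≠ ⟨d, hd⟩), zpowers ((j : G) ^ 2) := by
    rw [Subgroup.closure_le]
    rintro _ ⟨j, ⟨hj, hjd⟩, rfl⟩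
    exact le_iSup₂ (f := fun (j : X) (_ : j ≠ ⟨d, hd⟩) => zpowers ((j : G) ^ 2)) ⟨j, hj⟩
      (fun h => hjd (congrArg Subtype.val h)) (mem_zpowers _)
  exact hnt d hd (disjoint_def.1 (iSupIndep_def.1 hindep ⟨d, hd⟩) (mem_zpowers _) (hle hmem))

theorem sq_mem_closure {x d : G} (hx : x ∈ X) (hxd : x ≠ d) :
    x ^ 2 ∈ Subgroup.closure ((· ^ 2) '' (X \ {d})) :=
  subset_closure ⟨x, ⟨hx, hxd⟩, rfl⟩

theorem sq_ne_one (hX : SquaresIndependent X) {x : G} (hx : x ∈ X) : x ^ 2 ≠ 1 :=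
  fun h => hX x hx (h ▸ one_mem _)

theorem sq_notMem_zpowers_sq (hX : SquaresIndependent X) {x y : G} (hx : x ∈ X) (hy : y ∈ X)
    (hxy : x ≠ y) : y ^ 2 ∉ zpowers (x ^ 2) :=
  fun h => hX y hy (zpowers_le.2 (sq_mem_closure hx hxy) h)

end SquaresIndependent

namespace IsGood

open SquaresIndependent (sq_mem_closure)

variable {G : Type*} [Group G] {X : Set G}

theorem commutatorElement_eq_one_or_sq (hG : IsGood G) (h4 : ∀ g : G, g ^ 4 = 1)
    (hX : SquaresIndependent X) {x y : G} (hx : x ∈ X) (hy : y ∈ X) (hxy : x ≠ y) :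
    ⁅x, y⁆ = 1 ∨ ⁅x, y⁆ = y ^ 2 ∨ ⁅x, y⁆ = x ^ 2 := by
  have hsq := hG.sq_mem_center h4
  have hyy : (y ^ 2)⁻¹ = y ^ 2 := inv_eq_of_mul_eq_one_left (by rw [← pow_add]; exact h4 y)
  have hx4 : (x ^ 2) ^ 2 = 1 := by rw [← pow_mul]; exact h4 x
  rcases hG.commutatorElement_mem_or (hX.sq_notMem_zpowers_sq hx hy hxy) with h | h <;>
    rcases (mem_zpowers_iff_of_sq_eq_one hx4).1 h with h | h
  · exact Or.inl h
  · exact Or.inr (Or.inr h)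
  · exact Or.inr (Or.inl ((eq_inv_of_mul_eq_one_left h).trans hyy))
  · exfalso
    have hc : ⁅x, y⁆ = x ^ 2 * y ^ 2 := by rw [eq_mul_inv_of_mul_eq h, hyy]
    have hxy2 : (x * y) ^ 2 = 1 := by
      rw [mul_sq_of_sq_mem_center hsq, mul_assoc, ← hc,
        commutatorElement_mul_self_of_sq_mem_center hsq]
    have hmem := hG.commutatorElement_mem (u := x * y) (v := x)
      (S := Subgroup.closure ((· ^ 2) '' (X \ {y}))) (hxy2 ▸ one_mem _) (sq_mem_closure hx hxy)
      (by rw [hxy2, zpowers_one_eq_bot, mem_bot]; exact hX.sq_ne_one hx)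
    rw [commutatorElement_mul_left_of_sq_mem_center hsq, commutatorElement_self, one_mul,
      commutatorElement_comm_of_sq_mem_center hsq y x, hc] at hmem
    exact hX y hy ((mul_mem_cancel_left (sq_mem_closure hx hxy)).1 hmem)

theorem eq_of_commutatorElement_eq_sq (hG : IsGood G) (h4 : ∀ g : G, g ^ 4 = 1)
    (hX : SquaresIndependent X) {x y q : G} (hx : x ∈ X) (hy : y ∈ X) (hq : q ∈ X)
    (hxq : x ≠ q) (hyq : y ≠ q) (hxq' : ⁅x, q⁆ = q ^ 2) (hyq' : ⁅y, q⁆ = q ^ 2) : x = y := by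
  by_contra hxy
  have hsq := hG.sq_mem_center h4
  set S := Subgroup.closure ((· ^ 2) '' (X \ {q}))
  have hxyS : ⁅x, y⁆ ∈ S := by
    rcases hG.commutatorElement_eq_one_or_sq h4 hX hx hy hxy with h | h | h <;> rw [h]
    exacts [one_mem S, sq_mem_closure hy hyq, sq_mem_closure hx hxq]
  have hu : (x * q) ^ 2 = x ^ 2 := by
    rw [mul_sq_of_sq_mem_center hsq, hxq', sq_mul_mul_sq_of_pow_four hsq h4]
  have hmem := hG.commutatorElement_mem (u := x * q) (v := y) (S := S)
    (hu ▸ sq_mem_closure hx hxq) (sq_mem_closure hy hyq) (hu ▸ hX.sq_notMem_zpowers_sq hx hy hxy)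
  rw [commutatorElement_mul_left_of_sq_mem_center hsq,
    commutatorElement_comm_of_sq_mem_center hsq q y, hyq'] at hmem
  exact hX q hq ((mul_mem_cancel_left hxyS).1 hmem)

theorem commutatorElement_ne_sq_of_eq_sq (hG : IsGood G) (h4 : ∀ g : G, g ^ 4 = 1)
    (hX : SquaresIndependent X) {x y z : G} (hx : x ∈ X) (hy : y ∈ X) (hz : z ∈ X)
    (hxy : x ≠ y) (hyz : y ≠ z) (hxz : x ≠ z) (hxy' : ⁅x, y⁆ = y ^ 2) : ⁅y, z⁆ ≠ z ^ 2 := by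
  intro hyz'
  have hsq := hG.sq_mem_center h4
  set S := Subgroup.closure ((· ^ 2) '' (X \ {z}))
  have hxzS : ⁅x, z⁆ ∈ S := by
    rcases hG.commutatorElement_eq_one_or_sq h4 hX hx hz hxz with h | h | h
    · exact h ▸ one_mem S
    · exact absurd (hG.eq_of_commutatorElement_eq_sq h4 hX hx hy hz hxz hyz h hyz') hxy
    · exact h ▸ sq_mem_closure hx hxz
  have hu : (x * y) ^ 2 = x ^ 2 := by
    rw [mul_sq_of_sq_mem_center hsq, hxy', sq_mul_mul_sq_of_pow_four hsq h4]
  have hv : (y * z) ^ 2 = y ^ 2 := by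
    rw [mul_sq_of_sq_mem_center hsq, hyz', sq_mul_mul_sq_of_pow_four hsq h4]
  have hmem := hG.commutatorElement_mem (u := x * y) (v := y * z) (S := S)
    (hu ▸ sq_mem_closure hx hxz) (hv ▸ sq_mem_closure hy hyz)
    (hu ▸ hv ▸ hX.sq_notMem_zpowers_sq hx hy hxy)
  rw [commutatorElement_mul_left_of_sq_mem_center hsq,
    commutatorElement_mul_right_of_sq_mem_center hsq,
    commutatorElement_mul_right_of_sq_mem_center hsq, hxy', hyz', commutatorElement_self,
    one_mul] at hmem
  exact hX z hz ((mul_mem_cancel_left (mul_mem (sq_mem_closure hy hyz) hxzS)).1 hmem)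

theorem commutatorElement_ne_one_of_eq_sq (hG : IsGood G) (h4 : ∀ g : G, g ^ 4 = 1)
    (hX : SquaresIndependent X) {y q z : G} (hy : y ∈ X) (hq : q ∈ X) (hz : z ∈ X)
    (hyq : y ≠ q) (hyz : y ≠ z) (hqz : q ≠ z) (hyq' : ⁅y, q⁆ = q ^ 2) (hyz' : ⁅y, z⁆ = 1) :
    ⁅q, z⁆ ≠ 1 := by
  intro hqz'
  have hsq := hG.sq_mem_center h4
  have hu : (y * q) ^ 2 = y ^ 2 := by
    rw [mul_sq_of_sq_mem_center hsq, hyq', sq_mul_mul_sq_of_pow_four hsq h4]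
  have hv : (y * z) ^ 2 = y ^ 2 * z ^ 2 := by
    rw [mul_sq_of_sq_mem_center hsq, hyz', one_mul]
  have hvu : (y * z) ^ 2 ∉ zpowers ((y * q) ^ 2) := by
    rw [hu, hv]
    intro h
    have hyS := sq_mem_closure hy hyz
    exact hX z hz ((mul_mem_cancel_left hyS).1 (zpowers_le.2 hyS h))
  have hmem := hG.commutatorElement_mem (u := y * q) (v := y * z)
    (S := Subgroup.closure ((· ^ 2) '' (X \ {q}))) (hu ▸ sq_mem_closure hy hyq)
    (hv ▸ mul_mem (sq_mem_closure hy hyq) (sq_mem_closure hz hqz.symm)) hvu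
  rw [commutatorElement_mul_left_of_sq_mem_center hsq,
    commutatorElement_mul_right_of_sq_mem_center hsq,
    commutatorElement_mul_right_of_sq_mem_center hsq,
    commutatorElement_comm_of_sq_mem_center hsq q y, hyq', hyz', hqz',
    commutatorElement_self] at hmem
  simp only [mul_one, one_mul] at hmem
  exact hX q hq hmem

theorem commutatorElement_eq_sq_of_eq_sq (hG : IsGood G) (h4 : ∀ g : G, g ^ 4 = 1)
    (hX : SquaresIndependent X) {y q a : G} (hy : y ∈ X) (hq : q ∈ X) (ha : a ∈ X)
    (hyq : y ≠ q) (hay : a ≠ y) (hyq' : ⁅y, q⁆ = q ^ 2) : ⁅y, a⁆ = a ^ 2 := by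
  have hsq := hG.sq_mem_center h4
  rcases eq_or_ne a q with rfl | haq
  · exact hyq'
  rcases hG.commutatorElement_eq_one_or_sq h4 hX hy ha hay.symm with hya | hya | hya
  · rcases hG.commutatorElement_eq_one_or_sq h4 hX ha hq haq with haq' | haq' | haq'
    · rw [commutatorElement_comm_of_sq_mem_center hsq] at haq'
      exact absurd haq' (hG.commutatorElement_ne_one_of_eq_sq h4 hX hy hq ha hyq hay.symm
        haq.symm hyq' hya)
    · exact absurd (hG.eq_of_commutatorElement_eq_sq h4 hX ha hy hq haq hyq haq' hyq') hay
    · rw [commutatorElement_comm_of_sq_mem_center hsq] at haq'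
      exact absurd haq' (hG.commutatorElement_ne_sq_of_eq_sq h4 hX hy hq ha hyq haq.symm
        hay.symm hyq')
  · exact hya
  · rw [commutatorElement_comm_of_sq_mem_center hsq] at hya
    exact absurd hyq' (hG.commutatorElement_ne_sq_of_eq_sq h4 hX ha hy hq hay hyq haq hya)

theorem mul_comm_of_commutatorElement_eq_sq (hG : IsGood G) (h4 : ∀ g : G, g ^ 4 = 1)
    (hX : SquaresIndependent X) {y a b : G} (hy : y ∈ X)
    (hinv : ∀ c ∈ X, c ≠ y → ⁅y, c⁆ = c ^ 2) (ha : a ∈ X) (hb : b ∈ X) (hay : a ≠ y)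
    (hby : b ≠ y) : a * b = b * a := by
  rcases eq_or_ne a b with rfl | hab
  · rfl
  rw [← commutatorElement_eq_one_iff_mul_comm]
  rcases hG.commutatorElement_eq_one_or_sq h4 hX ha hb hab with h | h | h
  · exact h
  · exact absurd (hG.eq_of_commutatorElement_eq_sq h4 hX ha hy hb hab hby.symm h
      (hinv b hb hby)) hay
  · rw [commutatorElement_comm_of_sq_mem_center (hG.sq_mem_center h4)] at h
    exact absurd (hG.eq_of_commutatorElement_eq_sq h4 hX hb hy ha hab.symm hay.symm h
      (hinv a ha hay)) hby

end IsGood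

theorem good_exponent_four_basis_general (H : Type*) [Group H] (hgood : IsGood H)
    (hexp : Monoid.exponent H = 4) (X : Set H) (hnt : ∀ x ∈ X, x ^ 2 ≠ 1)
    (hindep : iSupIndep (fun x : X => Subgroup.zpowers ((x : H) ^ 2))) :
    (∀ a ∈ Subgroup.closure X, ∀ b ∈ Subgroup.closure X, a * b = b * a) ∨
    (∃ y ∈ X, (∀ a ∈ X, a ≠ y → ∀ b ∈ X, b ≠ y → a * b = b * a) ∧
      ∀ a ∈ X, a ≠ y → y⁻¹ * a * y = a⁻¹) := by
  have h4 (g : H) : g ^ 4 = 1 := hexp ▸ Monoid.pow_exponent_eq_one g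
  have hX := SquaresIndependent.of_iSupIndep hnt hindep
  by_cases hcomm : ∀ x ∈ X, ∀ y ∈ X, x * y = y * x
  · left
    intro a ha b hb
    exact congrArg Subtype.val
      ((Subgroup.isMulCommutative_closure hcomm).is_comm.comm ⟨a, ha⟩ ⟨b, hb⟩)
  right
  push Not at hcomm
  obtain ⟨x, hx, y, hy, hxy⟩ := hcomm
  obtain ⟨y₀, hy₀, q, hq, hy₀q, hy₀q'⟩ : ∃ y₀ ∈ X, ∃ q ∈ X, y₀ ≠ q ∧ ⁅y₀, q⁆ = q ^ 2 := by
    have hne : x ≠ y := by rintro rfl; exact hxy rfl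
    rcases hgood.commutatorElement_eq_one_or_sq h4 hX hx hy hne with h | h | h
    · exact absurd (commutatorElement_eq_one_iff_mul_comm.1 h) hxy
    · exact ⟨x, hx, y, hy, hne, h⟩
    · rw [commutatorElement_comm_of_sq_mem_center (hgood.sq_mem_center h4)] at h
      exact ⟨y, hy, x, hx, hne.symm, h⟩
  have hinv (a : H) (ha : a ∈ X) (hay₀ : a ≠ y₀) : ⁅y₀, a⁆ = a ^ 2 :=
    hgood.commutatorElement_eq_sq_of_eq_sq h4 hX hy₀ hq ha hy₀q hay₀ hy₀q'
  exact ⟨y₀, hy₀, fun a ha hay₀ b hb hby₀ =>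
    hgood.mul_comm_of_commutatorElement_eq_sq h4 hX hy₀ hinv ha hb hay₀ hby₀,
    fun a ha hay₀ => inv_mul_mul_eq_inv_of_commutatorElement_eq_sq (h4 a) (hinv a ha hay₀)⟩

/-- **Lemma 4.10**: let `H` be a good group of exponent 4 and `X` a subset such that
`Φ(H)` is the internal direct product of the subgroups `⟨x²⟩` (`x ∈ X`), each `x²`
nontrivial. Then either `⟨X⟩` is abelian, or all but one of the elements of `X` commute
with each other and are inverted by the remaining one. -/
theorem good_exponent_four_basis (H : Type*) [Group H] (hgood : IsGood H)
    (hexp : Monoid.exponent H = 4) (X : Set H) (hnt : ∀ x ∈ X, x ^ 2 ≠ 1)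
    (hindep : iSupIndep (fun x : X => Subgroup.zpowers ((x : H) ^ 2)))
    (hsup : (⨆ x : X, Subgroup.zpowers ((x : H) ^ 2)) = frattini H) :
    (∀ a ∈ Subgroup.closure X, ∀ b ∈ Subgroup.closure X, a * b = b * a) ∨
    (∃ y ∈ X, (∀ a ∈ X, a ≠ y → ∀ b ∈ X, b ≠ y → a * b = b * a) ∧
      ∀ a ∈ X, a ≠ y → y⁻¹ * a * y = a⁻¹) :=
  good_exponent_four_basis_general H hgood hexp X hnt hindep
end
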